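/- Fix β > 0, T > 0, t ∈ (0,T). For the denominator D(s) = I_0(2√(βT))K_1(2√(βs)) + K_0(2√(βT))I_1(2√(βs)), the following uniform bounds hold for 0 < s ≤ t: 0 < √(2T)·I_0(2√(βT))·K_1(2√(βT)) ≤ √(2s)·D(s) ≤ I_0(2√(βT))/√(2β) + √(2T)·K_0(2√(βT))·I_1(2√(βT)). -/

import Mathlib

/-!
The substitution `v = w sinh u` turns the integral representation of `K_1` into
`w K_1(w) = ∫_0^∞ exp (-√(v² + w²)) dv`, which is positive, at most `∫_0^∞ e^{-v} dv = 1`, and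
decreasing in `w`; termwise, `w I_1(w)` is increasing. Multiplied by `√(2β)`, the three quantities
of the statement become `I_0(a) · a K_1(a)`, `I_0(a) · b K_1(b) + K_0(a) · b I_1(b)` and
`I_0(a) + K_0(a) · a I_1(a)` with `a = 2√(βT) ≥ b = 2√(βs) > 0`, and these monotonicity facts
compare them.
-/

/-- Modified Bessel function of the first kind of integer order,
`I_ν(x) = Σ_{k=0}^∞ (x/2)^{2k+ν} / (k! (k+ν)!)`. -/
noncomputable def besselI (ν : ℕ) (x : ℝ) : ℝ :=
  ∑' k : ℕ, (x / 2) ^ (2 * k + ν) / ((Nat.factorial k : ℝ) * (Nat.factorial (k + ν) : ℝ))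

/-- Modified Bessel function of the second kind of integer order, via the
standard integral representation `K_ν(x) = ∫_0^∞ e^{-x cosh t} cosh(ν t) dt`. -/
noncomputable def besselK (ν : ℕ) (x : ℝ) : ℝ :=
  ∫ t in Set.Ioi (0 : ℝ), Real.exp (-x * Real.cosh t) * Real.cosh ((ν : ℝ) * t)

open MeasureTheory Real Set
open scoped Nat

lemma summable_besselI (ν : ℕ) (x : ℝ) :
    Summable fun k : ℕ => (x / 2) ^ (2 * k + ν) / ((k ! : ℝ) * ((k + ν)! : ℝ)) := by
  refine Summable.of_norm_bounded
    ((summable_pow_div_factorial ((x / 2) ^ 2)).mul_left (|x / 2| ^ ν)) fun k => ?_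
  have hk : (0 : ℝ) < k ! := mod_cast k.factorial_pos
  have hkν : (1 : ℝ) ≤ (k + ν)! := mod_cast (k + ν).factorial_pos
  rw [norm_div, norm_pow, Real.norm_eq_abs, Real.norm_of_nonneg (by positivity)]
  calc |x / 2| ^ (2 * k + ν) / (k ! * (k + ν)!)
      ≤ |x / 2| ^ (2 * k + ν) / k ! :=
        div_le_div_of_nonneg_left (by positivity) hk (le_mul_of_one_le_right hk.le hkν)
    _ = |x / 2| ^ ν * (((x / 2) ^ 2) ^ k / k !) := by rw [pow_add, pow_mul, sq_abs]; ring

lemma besselI_nonneg (ν : ℕ) {x : ℝ} (hx : 0 ≤ x) : 0 ≤ besselI ν x :=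
  tsum_nonneg fun _ => by positivity

lemma one_le_besselI_zero (x : ℝ) : 1 ≤ besselI 0 x := by
  have h := (summable_besselI 0 x).le_tsum 0 fun k _ => by
    rw [add_zero, pow_mul]
    positivity
  simpa [besselI] using h

lemma monotoneOn_mul_besselI_one : MonotoneOn (fun x => x * besselI 1 x) (Ici 0) := by
  intro x hx y hy hxy
  simp only [besselI, ← tsum_mul_left]
  refine Summable.tsum_le_tsum (fun k => ?_) ((summable_besselI 1 x).mul_left x)
    ((summable_besselI 1 y).mul_left y)
  have hx : 0 ≤ x := hx
  gcongr

lemma besselK_nonneg (ν : ℕ) (x : ℝ) : 0 ≤ besselK ν x :=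
  setIntegral_nonneg measurableSet_Ioi fun _ _ => by positivity

lemma image_const_mul_sinh_Ioi {w : ℝ} (hw : 0 < w) :
    (fun u => w * sinh u) '' Ioi 0 = Ioi 0 := by
  ext v
  constructor
  · rintro ⟨u, hu, rfl⟩
    exact mul_pos hw (sinh_pos_iff.mpr hu)
  · intro hv
    refine ⟨arsinh (v / w), arsinh_pos_iff.mpr (div_pos hv hw), ?_⟩
    simp only [sinh_arsinh]
    field_simp

lemma mul_besselK_one_eq_integral {w : ℝ} (hw : 0 < w) :
    w * besselK 1 w = ∫ v in Ioi 0, exp (-√(v ^ 2 + w ^ 2)) := by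
  have hderiv : ∀ u ∈ Ioi (0 : ℝ),
      HasDerivWithinAt (fun u => w * sinh u) (w * cosh u) (Ioi 0) u :=
    fun u _ => ((hasDerivAt_sinh u).const_mul w).hasDerivWithinAt
  have hinj : InjOn (fun u => w * sinh u) (Ioi 0) :=
    fun u _ u' _ h => sinh_injective (mul_left_cancel₀ hw.ne' h)
  rw [← image_const_mul_sinh_Ioi hw,
    integral_image_eq_integral_abs_deriv_smul measurableSet_Ioi hderiv hinj, besselK,
    ← integral_const_mul]
  refine setIntegral_congr_fun measurableSet_Ioi fun u _ => ?_
  have hsqrt : √((w * sinh u) ^ 2 + w ^ 2) = w * cosh u := by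
    rw [show (w * sinh u) ^ 2 + w ^ 2 = (w * cosh u) ^ 2 by rw [mul_pow, mul_pow, cosh_sq]; ring,
      sqrt_sq (by positivity)]
  rw [smul_eq_mul, hsqrt, abs_of_pos (by positivity), Nat.cast_one, one_mul, neg_mul]
  ring

lemma le_sqrt_sq_add_sq {v : ℝ} (hv : 0 ≤ v) (w : ℝ) : v ≤ √(v ^ 2 + w ^ 2) :=
  (Real.le_sqrt hv (by positivity)).mpr (by nlinarith)

lemma integrableOn_exp_neg_Ioi_zero : IntegrableOn (fun v : ℝ => exp (-v)) (Ioi 0) := by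
  simpa using exp_neg_integrableOn_Ioi (0 : ℝ) one_pos

lemma integrableOn_exp_neg_sqrt_sq_add_sq (w : ℝ) :
    IntegrableOn (fun v : ℝ => exp (-√(v ^ 2 + w ^ 2))) (Ioi 0) := by
  refine integrableOn_exp_neg_Ioi_zero.mono' (by fun_prop) ?_
  filter_upwards [ae_restrict_mem measurableSet_Ioi] with v hv
  rw [Real.norm_of_nonneg (exp_pos _).le]
  exact exp_le_exp.mpr (neg_le_neg (le_sqrt_sq_add_sq (le_of_lt hv) w))

lemma mul_besselK_one_le_one {w : ℝ} (hw : 0 < w) : w * besselK 1 w ≤ 1 := by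
  rw [mul_besselK_one_eq_integral hw, ← integral_exp_neg_Ioi_zero]
  exact setIntegral_mono_on (integrableOn_exp_neg_sqrt_sq_add_sq w)
    integrableOn_exp_neg_Ioi_zero measurableSet_Ioi fun v hv =>
      exp_le_exp.mpr (neg_le_neg (le_sqrt_sq_add_sq (le_of_lt hv) w))

lemma antitoneOn_mul_besselK_one : AntitoneOn (fun w => w * besselK 1 w) (Ioi 0) := by
  intro w hw w' hw' hww'
  simp only [mul_besselK_one_eq_integral hw, mul_besselK_one_eq_integral hw']
  refine setIntegral_mono_on (integrableOn_exp_neg_sqrt_sq_add_sq w')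
    (integrableOn_exp_neg_sqrt_sq_add_sq w) measurableSet_Ioi fun v _ => ?_
  have hw : 0 < w := hw
  gcongr

lemma mul_besselK_one_pos {w : ℝ} (hw : 0 < w) : 0 < w * besselK 1 w := by
  have hlower : ∀ v ∈ Ioi (0 : ℝ), exp (-w) * exp (-v) ≤ exp (-√(v ^ 2 + w ^ 2)) := by
    intro v hv
    have hv : 0 < v := hv
    have hsqrt : √(v ^ 2 + w ^ 2) ≤ v + w := (sqrt_le_left (by positivity)).mpr (by nlinarith)
    rw [← exp_add, exp_le_exp]
    linarith
  rw [mul_besselK_one_eq_integral hw]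
  calc (0 : ℝ) < exp (-w) * ∫ v in Ioi 0, exp (-v) := by
        rw [integral_exp_neg_Ioi_zero, mul_one]; positivity
    _ = ∫ v in Ioi 0, exp (-w) * exp (-v) := (integral_const_mul _ _).symm
    _ ≤ _ := setIntegral_mono_on (integrableOn_exp_neg_Ioi_zero.const_mul _)
        (integrableOn_exp_neg_sqrt_sq_add_sq w) measurableSet_Ioi hlower

noncomputable def besselDenominator (a b : ℝ) : ℝ :=
  besselI 0 a * besselK 1 b + besselK 0 a * besselI 1 b

section besselDenominator

variable {a b : ℝ}

lemma le_mul_besselDenominator (hb : 0 < b) (hba : b ≤ a) :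
    a * besselI 0 a * besselK 1 a ≤ b * besselDenominator a b := by
  have hK1 : a * besselK 1 a ≤ b * besselK 1 b :=
    antitoneOn_mul_besselK_one hb (hb.trans_le hba) hba
  have hI0 : 0 ≤ besselI 0 a := zero_le_one.trans (one_le_besselI_zero a)
  have hrest : 0 ≤ besselK 0 a * (b * besselI 1 b) :=
    mul_nonneg (besselK_nonneg 0 a) (mul_nonneg hb.le (besselI_nonneg 1 hb.le))
  rw [besselDenominator]
  nlinarith [mul_le_mul_of_nonneg_left hK1 hI0]

lemma mul_besselDenominator_le (hb : 0 < b) (hba : b ≤ a) :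
    b * besselDenominator a b ≤ besselI 0 a + a * besselK 0 a * besselI 1 a := by
  have hK1 : b * besselK 1 b ≤ 1 := mul_besselK_one_le_one hb
  have hI1 : b * besselI 1 b ≤ a * besselI 1 a :=
    monotoneOn_mul_besselI_one hb.le (hb.le.trans hba) hba
  have hI0 : 0 ≤ besselI 0 a := zero_le_one.trans (one_le_besselI_zero a)
  rw [besselDenominator]
  nlinarith [mul_le_mul_of_nonneg_left hK1 hI0,
    mul_le_mul_of_nonneg_left hI1 (besselK_nonneg 0 a)]

end besselDenominator

lemma sqrt_two_mul_eq_div {β x : ℝ} (hβ : 0 < β) (hx : 0 ≤ x) :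
    √(2 * x) = 2 * √(β * x) / √(2 * β) := by
  rw [eq_div_iff (by positivity), ← sqrt_mul (by positivity),
    show 2 * x * (2 * β) = 2 ^ 2 * (β * x) by ring, sqrt_mul (by positivity),
    sqrt_sq zero_le_two]

theorem denominator_bounds_general (β t T : ℝ) (hβ : 0 < β) (htT : t < T) :
    ∀ s : ℝ, 0 < s → s ≤ t →
      (0 < Real.sqrt (2 * T) * besselI 0 (2 * Real.sqrt (β * T)) *
          besselK 1 (2 * Real.sqrt (β * T))) ∧
      Real.sqrt (2 * T) * besselI 0 (2 * Real.sqrt (β * T)) *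
          besselK 1 (2 * Real.sqrt (β * T)) ≤
        Real.sqrt (2 * s) *
          (besselI 0 (2 * Real.sqrt (β * T)) * besselK 1 (2 * Real.sqrt (β * s)) +
            besselK 0 (2 * Real.sqrt (β * T)) * besselI 1 (2 * Real.sqrt (β * s))) ∧
      Real.sqrt (2 * s) *
          (besselI 0 (2 * Real.sqrt (β * T)) * besselK 1 (2 * Real.sqrt (β * s)) +
            besselK 0 (2 * Real.sqrt (β * T)) * besselI 1 (2 * Real.sqrt (β * s))) ≤
        besselI 0 (2 * Real.sqrt (β * T)) / Real.sqrt (2 * β) +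
          Real.sqrt (2 * T) * besselK 0 (2 * Real.sqrt (β * T)) *
            besselI 1 (2 * Real.sqrt (β * T)) := by
  intro s hs hst
  have hsT : s < T := hst.trans_lt htT
  have hc : 0 < √(2 * β) := by positivity
  have hba : 2 * √(β * s) ≤ 2 * √(β * T) := by gcongr
  rw [sqrt_two_mul_eq_div hβ hs.le, sqrt_two_mul_eq_div hβ (hs.trans hsT).le]
  set a := 2 * √(β * T)
  set b := 2 * √(β * s)
  have hb : 0 < b := by positivity
  simp only [div_mul_eq_mul_div, ← add_div]
  refine ⟨div_pos ?_ hc, div_le_div_of_nonneg_right (le_mul_besselDenominator hb hba) hc.le,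
    div_le_div_of_nonneg_right (mul_besselDenominator_le hb hba) hc.le⟩
  rw [mul_right_comm]
  exact mul_pos (mul_besselK_one_pos (hb.trans_le hba))
    (zero_lt_one.trans_le (one_le_besselI_zero a))

/-- Uniform bounds for the denominator
`D(s) = I_0(2√(βT)) K_1(2√(βs)) + K_0(2√(βT)) I_1(2√(βs))` over `0 < s ≤ t < T`. -/
theorem denominator_bounds (β t T : ℝ) (hβ : 0 < β) (hT : 0 < T) (ht : 0 < t) (htT : t < T) :
    ∀ s : ℝ, 0 < s → s ≤ t →
      (0 < Real.sqrt (2 * T) * besselI 0 (2 * Real.sqrt (β * T)) *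
          besselK 1 (2 * Real.sqrt (β * T))) ∧
      Real.sqrt (2 * T) * besselI 0 (2 * Real.sqrt (β * T)) *
          besselK 1 (2 * Real.sqrt (β * T)) ≤
        Real.sqrt (2 * s) *
          (besselI 0 (2 * Real.sqrt (β * T)) * besselK 1 (2 * Real.sqrt (β * s)) +
            besselK 0 (2 * Real.sqrt (β * T)) * besselI 1 (2 * Real.sqrt (β * s))) ∧
      Real.sqrt (2 * s) *
          (besselI 0 (2 * Real.sqrt (β * T)) * besselK 1 (2 * Real.sqrt (β * s)) +
            besselK 0 (2 * Real.sqrt (β * T)) * besselI 1 (2 * Real.sqrt (β * s))) ≤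
        besselI 0 (2 * Real.sqrt (β * T)) / Real.sqrt (2 * β) +
          Real.sqrt (2 * T) * besselK 0 (2 * Real.sqrt (β * T)) *
            besselI 1 (2 * Real.sqrt (β * T)) :=
  denominator_bounds_general β t T hβ htT
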